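/- arXiv:1205.3044 — 2 statements merged into one kernel-verified Lean document; each statement's English description precedes it below -/
import Mathlib

section
/- If the Hessian matrix of the height function h at the origin is degenerate (its determinant vanishes) for the quadratic normal form Whitney umbrella with a₀₂ ≠ 0, then cosθ ≠ 0 and consequently h_vv(0,0) ≠ 0; in particular the Hessian never has rank 0, so h never has a singularity of type D₄ or worse at the origin. -/
/-!
In the coordinates of the normal form the height function is the quadratic form
`h = (p u² + 2 q u v + r v²) / 2` with `p = a₂₀ cos θ / A`, `q = -a₀₂ sin θ / A`,
`r = a₀₂ cos θ / A`, so its Hessian at the origin is `!![p, q; q, r]`. Clearing `A²`,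
degeneracy reads `a₂₀ a₀₂ cos² θ = a₀₂² sin² θ`. If `cos θ` vanished, then `sin² θ = 1` would
force `a₀₂ = 0`; hence `cos θ ≠ 0` and `h_vv = a₀₂ cos θ / A ≠ 0`.
-/

lemma hasDerivAt_quadratic (a b c x : ℝ) :
    HasDerivAt (fun x => a * x ^ 2 + b * x + c) (2 * a * x + b) x := by
  simpa [mul_comm, mul_left_comm] using
    (((hasDerivAt_pow 2 x).const_mul a).add ((hasDerivAt_id x).const_mul b)).add_const c

lemma deriv_quadratic (a b c : ℝ) :
    deriv (fun x => a * x ^ 2 + b * x + c) = fun x => 2 * a * x + b :=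
  funext fun x => (hasDerivAt_quadratic a b c x).deriv

lemma deriv_deriv_quadratic (a b c x : ℝ) :
    deriv (deriv fun x => a * x ^ 2 + b * x + c) x = 2 * a := by
  rw [deriv_quadratic]
  simp

section QuadraticForm

variable {p q r : ℝ} {h : ℝ × ℝ → ℝ}

lemma deriv_deriv_fst_of_eq_quadraticForm
    (hh : ∀ x : ℝ × ℝ, h x = (p * x.1 ^ 2 + 2 * q * x.1 * x.2 + r * x.2 ^ 2) / 2) :
    deriv (deriv fun u => h (u, 0)) 0 = p := by
  have slice : (fun u => h (u, 0)) = fun u => p / 2 * u ^ 2 + 0 * u + 0 := by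
    funext u; rw [hh]; ring
  rw [slice, deriv_deriv_quadratic]; ring

lemma deriv_deriv_snd_of_eq_quadraticForm
    (hh : ∀ x : ℝ × ℝ, h x = (p * x.1 ^ 2 + 2 * q * x.1 * x.2 + r * x.2 ^ 2) / 2) :
    deriv (deriv fun v => h (0, v)) 0 = r := by
  have slice : (fun v => h (0, v)) = fun v => r / 2 * v ^ 2 + 0 * v + 0 := by
    funext v; rw [hh]; ring
  rw [slice, deriv_deriv_quadratic]; ring

lemma deriv_deriv_mixed_of_eq_quadraticForm
    (hh : ∀ x : ℝ × ℝ, h x = (p * x.1 ^ 2 + 2 * q * x.1 * x.2 + r * x.2 ^ 2) / 2) :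
    deriv (fun u => deriv (fun v => h (u, v)) 0) 0 = q := by
  have partial_v : (fun u => deriv (fun v => h (u, v)) 0) = fun u => 0 * u ^ 2 + q * u + 0 := by
    funext u
    have slice : (fun v => h (u, v)) = fun v => r / 2 * v ^ 2 + q * u * v + p / 2 * u ^ 2 := by
      funext v; rw [hh]; ring
    rw [slice, deriv_quadratic]; ring
  rw [partial_v, deriv_quadratic]; ring

end QuadraticForm

lemma Real.cos_ne_zero_of_mul_cos_sq_eq_mul_sin_sq {a b θ : ℝ} (ha : a ≠ 0)
    (h : b * Real.cos θ ^ 2 = a * Real.sin θ ^ 2) : Real.cos θ ≠ 0 := by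
  intro hcos
  have hsin : Real.sin θ ^ 2 = 1 := by nlinarith [Real.sin_sq_add_cos_sq θ]
  rw [hcos, hsin] at h
  exact ha (by linarith)

theorem stmt6_general (a20 a11 a02 θ : ℝ) (ha02 : a02 ≠ 0)
    (A : ℝ)
    (hA0 : A ≠ 0)
    (h : ℝ × ℝ → ℝ)
    (hh : ∀ p : ℝ × ℝ, h p =
      p.1 * 0 + (p.1 * p.2) * (-(a11 * Real.cos θ + a02 * Real.sin θ) / A) +
        ((a20 * p.1 ^ 2 + 2 * a11 * p.1 * p.2 + a02 * p.2 ^ 2) / 2) * (Real.cos θ / A))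
    (hdeg : deriv (deriv (fun u => h (u, 0))) 0 * deriv (deriv (fun v => h (0, v))) 0 -
      (deriv (fun u => deriv (fun v => h (u, v)) 0) 0) ^ 2 = 0) :
    Real.cos θ ≠ 0 ∧
    deriv (deriv (fun v => h (0, v))) 0 ≠ 0 ∧
    (!![deriv (deriv (fun u => h (u, 0))) 0, deriv (fun u => deriv (fun v => h (u, v)) 0) 0;
        deriv (fun u => deriv (fun v => h (u, v)) 0) 0, deriv (deriv (fun v => h (0, v))) 0]
      : Matrix (Fin 2) (Fin 2) ℝ) ≠ 0 := by
  have hform : ∀ x : ℝ × ℝ, h x = (a20 * Real.cos θ / A * x.1 ^ 2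
      + 2 * (-(a02 * Real.sin θ) / A) * x.1 * x.2 + a02 * Real.cos θ / A * x.2 ^ 2) / 2 := by
    intro x; rw [hh]; ring
  rw [deriv_deriv_fst_of_eq_quadraticForm hform, deriv_deriv_snd_of_eq_quadraticForm hform,
    deriv_deriv_mixed_of_eq_quadraticForm hform] at hdeg ⊢
  have hcos : Real.cos θ ≠ 0 := by
    refine Real.cos_ne_zero_of_mul_cos_sq_eq_mul_sin_sq (b := a20 * a02) (pow_ne_zero 2 ha02) ?_
    field_simp at hdeg
    linear_combination hdeg
  have hvv : a02 * Real.cos θ / A ≠ 0 := div_ne_zero (mul_ne_zero ha02 hcos) hA0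
  refine ⟨hcos, hvv, fun hzero => hvv ?_⟩
  simpa using congrFun (congrFun hzero 1) 1

/-- If the Hessian of the height function at the origin is degenerate then
`cos θ ≠ 0`, hence `h_vv(0,0) ≠ 0`; in particular the Hessian matrix is never zero
(never has rank 0), so `h` has no singularity of type `D₄` or worse at the origin. -/
theorem stmt6 (a20 a11 a02 θ : ℝ) (ha02 : a02 ≠ 0)
    (A : ℝ)
    (hA : A = Real.sqrt ((Real.cos θ) ^ 2 + (a11 * Real.cos θ + a02 * Real.sin θ) ^ 2))
    (hA0 : A ≠ 0)
    (h : ℝ × ℝ → ℝ)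
    (hh : ∀ p : ℝ × ℝ, h p =
      p.1 * 0 + (p.1 * p.2) * (-(a11 * Real.cos θ + a02 * Real.sin θ) / A) +
        ((a20 * p.1 ^ 2 + 2 * a11 * p.1 * p.2 + a02 * p.2 ^ 2) / 2) * (Real.cos θ / A))
    (hdeg : deriv (deriv (fun u => h (u, 0))) 0 * deriv (deriv (fun v => h (0, v))) 0 -
      (deriv (fun u => deriv (fun v => h (u, v)) 0) 0) ^ 2 = 0) :
    Real.cos θ ≠ 0 ∧
    deriv (deriv (fun v => h (0, v))) 0 ≠ 0 ∧
    (!![deriv (deriv (fun u => h (u, 0))) 0, deriv (fun u => deriv (fun v => h (u, v)) 0) 0;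
        deriv (fun u => deriv (fun v => h (u, v)) 0) 0, deriv (deriv (fun v => h (0, v))) 0]
      : Matrix (Fin 2) (Fin 2) ℝ) ≠ 0 :=
  stmt6_general a20 a11 a02 θ ha02 A hA0 h hh hdeg
end

section
/- Let φ : ℝ → ℝ be a smooth function with φ(v₁) = φ(v₂) whenever σ(v₁) = σ(v₂) for an involution σ(v) = −v + c v² + O(v³) fixing 0 (σ∘σ = id, σ'(0) = −1). If φ is not flat at 0, then the order of the first nonvanishing derivative of φ at 0 is even. -/
open Filter Topology

/-- Peano-form Taylor limit: if the first `m-1` derivatives of a smooth `f`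
vanish at `0` (including `f 0 = 0`), then `f v / v ^ m` tends to
`f^(m)(0) / m!` as `v → 0` (punctured). -/
lemma peano_limit : ∀ m : ℕ, 1 ≤ m → ∀ f : ℝ → ℝ, ContDiff ℝ ((⊤ : ℕ∞) : WithTop ℕ∞) f →
    (∀ k, k < m → iteratedDeriv k f 0 = 0) →
    Tendsto (fun v => f v / v ^ m) (𝓝[≠] (0 : ℝ))
      (𝓝 (iteratedDeriv m f 0 / m.factorial)) := by
  intro m hm
  induction m, hm using Nat.le_induction with
  | base =>
    intro f hf h0
    have hf0 : f 0 = 0 := by simpa using h0 0 one_pos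
    have hd : HasDerivAt f (deriv f 0) 0 := (hf.differentiable (by simp) 0).hasDerivAt
    have := hasDerivAt_iff_tendsto_slope.mp hd
    have heq : (fun v : ℝ => f v / v ^ 1) = slope f 0 := by
      funext v
      simp [slope_def_field, hf0]
    rw [heq]
    simpa [iteratedDeriv_one] using this
  | succ m hm ih =>
    intro f hf h0
    have hdf : ContDiff ℝ ((⊤ : ℕ∞) : WithTop ℕ∞) (deriv f) := (contDiff_infty_iff_deriv.mp hf).2
    have h0' : ∀ k, k < m → iteratedDeriv k (deriv f) 0 = 0 := by
      intro k hk
      rw [← iteratedDeriv_succ']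
      exact h0 (k + 1) (by omega)
    have hIH := ih (deriv f) hdf h0'
    have hf0 : f 0 = 0 := h0 0 (by omega)
    have key : iteratedDeriv m (deriv f) 0 = iteratedDeriv (m + 1) f 0 := by
      rw [← iteratedDeriv_succ']
    apply deriv.lhopital_zero_nhdsNE (g := fun v : ℝ => v ^ (m + 1))
    · exact Eventually.of_forall fun x => (hf.differentiable (by simp)).differentiableAt
    · filter_upwards [self_mem_nhdsWithin] with x hx
      have hx' : x ≠ 0 := hx
      simp only [deriv_pow_field]
      positivity
    · have : Tendsto f (𝓝 (0 : ℝ)) (𝓝 (f 0)) := hf.continuous.tendsto 0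
      rw [hf0] at this
      exact this.mono_left nhdsWithin_le_nhds
    · have : Tendsto (fun v : ℝ => v ^ (m + 1)) (𝓝 0) (𝓝 (0 ^ (m + 1))) :=
        (continuous_pow (m + 1)).tendsto 0
      simpa using this.mono_left nhdsWithin_le_nhds
    · have h2 : Tendsto (fun v => deriv f v / v ^ m / (m + 1 : ℝ)) (𝓝[≠] (0 : ℝ))
          (𝓝 (iteratedDeriv m (deriv f) 0 / m.factorial / (m + 1 : ℝ))) := hIH.div_const _
      have heq2 : (fun v : ℝ => deriv f v / deriv (fun v : ℝ => v ^ (m + 1)) v)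
          = fun v => deriv f v / v ^ m / (m + 1 : ℝ) := by
        funext v
        simp only [deriv_pow_field]
        push_cast
        rw [div_div]
        ring_nf
      rw [heq2]
      convert h2 using 2
      rw [key, Nat.factorial_succ]
      push_cast
      rw [div_div]
      ring_nf

/-- If `φ` is invariant under a smooth involution `σ` fixing `0` with `σ'(0) = −1`,
and `φ` is not flat at `0`, then the order of its first nonvanishing derivative at `0`
is even. -/
theorem stmt7 (σ φ : ℝ → ℝ) (hσ : ContDiff ℝ (⊤ : ℕ∞) σ) (hσ0 : σ 0 = 0)
    (hinv : ∀ v, σ (σ v) = v) (hσ' : deriv σ 0 = -1)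
    (hφ : ContDiff ℝ (⊤ : ℕ∞) φ) (heq : ∀ v, φ (σ v) = φ v)
    (m : ℕ) (hm : 1 ≤ m)
    (hfirst : ∀ k, 1 ≤ k → k < m → iteratedDeriv k φ 0 = 0)
    (hne : iteratedDeriv m φ 0 ≠ 0) :
    Even m := by
  set f : ℝ → ℝ := fun v => φ v - φ 0 with hfdef
  have hfC : ContDiff ℝ ((⊤ : ℕ∞) : WithTop ℕ∞) f := (hφ.of_le (by simp)).sub contDiff_const
  have hderiv_eq : ∀ k, iteratedDeriv (k + 1) f = iteratedDeriv (k + 1) φ := by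
    intro k
    have hd : deriv f = deriv φ := by
      funext x
      exact deriv_sub_const (φ 0)
    rw [iteratedDeriv_succ', iteratedDeriv_succ', hd]
  have hzero : ∀ k, k < m → iteratedDeriv k f 0 = 0 := by
    intro k hk
    rcases Nat.eq_zero_or_pos k with rfl | hk1
    · simp [f]
    · obtain ⟨j, rfl⟩ : ∃ j, k = j + 1 := ⟨k - 1, by omega⟩
      rw [hderiv_eq j]
      exact hfirst _ hk1 hk
  obtain ⟨n, rfl⟩ : ∃ n, m = n + 1 := ⟨m - 1, by omega⟩
  have hfm : iteratedDeriv (n + 1) f 0 = iteratedDeriv (n + 1) φ 0 := by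
    rw [hderiv_eq n]
  set L : ℝ := iteratedDeriv (n + 1) φ 0 / (n + 1).factorial with hL
  have hL1 : Tendsto (fun v => f v / v ^ (n + 1)) (𝓝[≠] (0 : ℝ)) (𝓝 L) := by
    have := peano_limit (n + 1) (by omega) f hfC hzero
    rwa [hfm] at this
  -- σ facts
  have hinj : Function.Injective σ := Function.LeftInverse.injective hinv
  have hσne : ∀ v : ℝ, v ≠ 0 → σ v ≠ 0 := by
    intro v hv h
    exact hv (hinj (h.trans hσ0.symm))
  have hσd : HasDerivAt σ (-1) 0 := by
    rw [← hσ']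
    exact (hσ.differentiable (by simp) 0).hasDerivAt
  have hslope : Tendsto (fun v => σ v / v) (𝓝[≠] (0 : ℝ)) (𝓝 (-1)) := by
    have := hasDerivAt_iff_tendsto_slope.mp hσd
    have heq2 : slope σ 0 = fun v => σ v / v := by
      funext v
      simp [slope_def_field, hσ0]
    rwa [heq2] at this
  have htends : Tendsto σ (𝓝[≠] (0 : ℝ)) (𝓝[≠] (0 : ℝ)) := by
    rw [tendsto_nhdsWithin_iff]
    constructor
    · have : Tendsto σ (𝓝 (0 : ℝ)) (𝓝 (σ 0)) := hσ.continuous.tendsto 0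
      rw [hσ0] at this
      exact this.mono_left nhdsWithin_le_nhds
    · filter_upwards [self_mem_nhdsWithin] with v hv
      exact hσne v hv
  have h1 : Tendsto (fun v => f (σ v) / (σ v) ^ (n + 1)) (𝓝[≠] (0 : ℝ)) (𝓝 L) :=
    hL1.comp htends
  have h2 : Tendsto (fun v => (σ v / v) ^ (n + 1)) (𝓝[≠] (0 : ℝ))
      (𝓝 ((-1 : ℝ) ^ (n + 1))) := hslope.pow (n + 1)
  have h3 : Tendsto (fun v => f (σ v) / (σ v) ^ (n + 1) * (σ v / v) ^ (n + 1))
      (𝓝[≠] (0 : ℝ)) (𝓝 (L * (-1 : ℝ) ^ (n + 1))) := h1.mul h2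
  have heqev : (fun v => f (σ v) / (σ v) ^ (n + 1) * (σ v / v) ^ (n + 1))
      =ᶠ[𝓝[≠] (0 : ℝ)] fun v => f v / v ^ (n + 1) := by
    filter_upwards [self_mem_nhdsWithin] with v hv
    have hv' : (v : ℝ) ≠ 0 := hv
    have hσv : σ v ≠ 0 := hσne v hv'
    have hfv : f (σ v) = f v := by simp [f, heq v]
    rw [hfv, div_pow]
    field_simp
  have h4 : Tendsto (fun v => f v / v ^ (n + 1)) (𝓝[≠] (0 : ℝ))
      (𝓝 (L * (-1 : ℝ) ^ (n + 1))) := h3.congr' heqev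
  have hLL : L = L * (-1 : ℝ) ^ (n + 1) := tendsto_nhds_unique hL1 h4
  have hLne : L ≠ 0 := by
    rw [hL]
    exact div_ne_zero hne (by positivity)
  rcases Nat.even_or_odd (n + 1) with he | ho
  · exact he
  · exfalso
    rw [ho.neg_one_pow] at hLL
    apply hLne
    linarith
end
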